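/- Let n ≥ 3 and let C(n) = 𝓗^{n−2}(S^{n−2}) be the (n−2)-dimensional Hausdorff measure of the unit sphere S^{n−2} ⊂ ℝ^{n−1}. For t ∈ ℝ and R ≥ 0 define e(t,R) = C(n)^{−1} ∫_{S^{n−2}} ( t² + |R e₁ − y|² )^{(2−n)/2} d𝓗^{n−2}(y), where e₁ is a fixed unit vector of ℝ^{n−1}. Then: the function t ↦ e(t,1) is even; it is finite, continuous, and strictly decreasing on (0,∞); and there is a constant c > 0 depending only on n such that e(t,1) − e(t′,1) ≥ c whenever 0 < 2t < t′ < 1. -/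

import Mathlib

/-!
With `p = (2 - n) / 2 < 0`, the kernel `(t² + ‖e₁ - y‖²) ^ p` is bounded by `t ^ (2p)` and strictly
decreasing in `t > 0`; since `𝓗^{n-2}(S^{n-2})` is finite and positive, this gives integrability,
continuity (dominated convergence) and strict monotonicity of `e(·, 1)` on `(0, ∞)`.
The sphere has finite measure by compactness: on each cap `{y ∈ S | ⟪u, y⟫ ≥ 1/2}` the
orthogonal projection onto `uᗮ` is bi-Lipschitz onto a subset of the unit ball of `uᗮ`.

For the uniform gap, on `S ∩ B(e₁, t)` the kernel drops by at least `(2 ^ p - 4 ^ p) t ^ (2p)`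
between the heights `t` and `t' ≥ 2t`, while `𝓗^{n-2}(S ∩ B(e₁, t)) ≥ κ t ^ (n-2)` because the
projection onto `e₁ᗮ` is `1`-Lipschitz and maps this set onto a superset of the ball of radius
`t / 2` in `e₁ᗮ`. As `t ^ (2p) t ^ (n-2) = 1`, the resulting lower bound does not depend on `t`.
-/

open MeasureTheory

noncomputable section

/-- `C(n) = 𝓗^{n−2}(S^{n−2})`, the `(n−2)`-dimensional Hausdorff measure of the unit sphere
`S^{n−2} ⊂ ℝ^{n−1}`. -/
def sphC (n : ℕ) : ℝ :=
  (μH[(n : ℝ) - 2] (Metric.sphere (0 : EuclideanSpace ℝ (Fin (n - 1))) 1)).toReal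

/-- `e(t,R) = C(n)⁻¹ ∫_{S^{n−2}} (t² + |R e₁ − y|²)^{(2−n)/2} d𝓗^{n−2}(y)`: the Newtonian
potential at the point `(t, R e₁) ∈ ℝ × ℝ^{n−1} = ℝⁿ` created by the normalized Hausdorff
measure of the sphere `{0} × S^{n−2} ⊂ ℝⁿ`. -/
def eFun (n : ℕ) (e₁ : EuclideanSpace ℝ (Fin (n - 1))) (t R : ℝ) : ℝ :=
  (sphC n)⁻¹ *
    ∫ y in Metric.sphere (0 : EuclideanSpace ℝ (Fin (n - 1))) 1,
      (t ^ 2 + ‖R • e₁ - y‖ ^ 2) ^ (((2 : ℝ) - n) / 2) ∂(μH[(n : ℝ) - 2])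

open Metric Set Module Filter Topology
open scoped RealInnerProductSpace NNReal

section Potential

variable {E : Type*} [SeminormedAddCommGroup E] {x : E} {p t t' : ℝ}

lemma continuous_rpow_sq_add_norm_sub_sq (ht : t ≠ 0) :
    Continuous fun y : E => (t ^ 2 + ‖x - y‖ ^ 2) ^ p :=
  (by fun_prop : Continuous fun y : E => t ^ 2 + ‖x - y‖ ^ 2).rpow_const
    fun _ => Or.inl (by positivity)

lemma rpow_sq_add_norm_sub_sq_le (hp : p ≤ 0) (ht : t ≠ 0) (y : E) :
    (t ^ 2 + ‖x - y‖ ^ 2) ^ p ≤ (t ^ 2) ^ p :=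
  Real.rpow_le_rpow_of_nonpos (by positivity) (le_add_of_nonneg_right (sq_nonneg _)) hp

variable [MeasurableSpace E] [OpensMeasurableSpace E] {μ : Measure E} {s : Set E}

lemma integrableOn_rpow_sq_add_norm_sub_sq (hs : μ s ≠ ⊤) (hp : p ≤ 0) (ht : t ≠ 0) :
    IntegrableOn (fun y => (t ^ 2 + ‖x - y‖ ^ 2) ^ p) s μ :=
  .mono' (integrableOn_const (C := (t ^ 2) ^ p) hs)
    (continuous_rpow_sq_add_norm_sub_sq ht).aestronglyMeasurable
    (ae_of_all _ fun y => by
      rw [Real.norm_of_nonneg (by positivity)]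
      exact rpow_sq_add_norm_sub_sq_le hp ht y)

lemma continuousOn_integral_rpow_sq_add_norm_sub_sq (hs : μ s ≠ ⊤) (hp : p ≤ 0) :
    ContinuousOn (fun t => ∫ y in s, (t ^ 2 + ‖x - y‖ ^ 2) ^ p ∂μ) (Ioi 0) := by
  intro t₀ (ht₀ : 0 < t₀)
  refine (continuousAt_of_dominated (bound := fun _ => ((t₀ / 2) ^ 2) ^ p) ?_ ?_
    (integrableOn_const hs) (ae_of_all _ fun y => ?_)).continuousWithinAt
  · filter_upwards [eventually_ne_nhds (ne_of_gt ht₀)] with t ht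
    exact (continuous_rpow_sq_add_norm_sub_sq ht).aestronglyMeasurable
  · filter_upwards [eventually_gt_nhds (half_lt_self ht₀)] with t ht
    have ht0 : 0 < t := (half_pos ht₀).trans ht
    refine ae_of_all _ fun y => ?_
    rw [Real.norm_of_nonneg (by positivity)]
    refine (rpow_sq_add_norm_sub_sq_le hp ht0.ne' y).trans ?_
    exact Real.rpow_le_rpow_of_nonpos (by positivity) (by gcongr) hp
  · exact ContinuousAt.rpow_const (by fun_prop) (Or.inl (by positivity))

lemma strictAntiOn_integral_rpow_sq_add_norm_sub_sq (hs : μ s ≠ ⊤) (hs₀ : μ s ≠ 0) (hp : p < 0) :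
    StrictAntiOn (fun t => ∫ y in s, (t ^ 2 + ‖x - y‖ ^ 2) ^ p ∂μ) (Ioi 0) := by
  intro t ht t' ht' htt'
  have ht0 : (0 : ℝ) < t := ht
  have hlt : ∀ y : E, (t' ^ 2 + ‖x - y‖ ^ 2) ^ p < (t ^ 2 + ‖x - y‖ ^ 2) ^ p := fun y =>
    Real.rpow_lt_rpow_of_neg (by positivity) (by gcongr) hp
  have hint := fun {t : ℝ} (ht : (0 : ℝ) < t) =>
    integrableOn_rpow_sq_add_norm_sub_sq (x := x) (p := p) hs hp.le ht.ne'
  rw [← sub_pos, ← integral_sub (hint ht0) (hint (ht0.trans htt')),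
    integral_pos_iff_support_of_nonneg (fun y => sub_nonneg.2 (hlt y).le)
      ((hint ht0).sub (hint (ht0.trans htt')))]
  rw [Function.support_eq_univ fun y => sub_ne_zero.2 (hlt y).ne', Measure.restrict_apply_univ]
  exact pos_iff_ne_zero.2 hs₀

lemma mul_measureReal_le_integral_sub_integral_rpow_sq_add_norm_sub_sq (hsm : MeasurableSet s)
    (hs : μ s ≠ ⊤) (hp : p ≤ 0) (ht : 0 < t) (htt' : 2 * t ≤ t') :
    (2 ^ p - 4 ^ p) * (t ^ 2) ^ p * μ.real (s ∩ closedBall x t) ≤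
      ∫ y in s, (t ^ 2 + ‖x - y‖ ^ 2) ^ p ∂μ - ∫ y in s, (t' ^ 2 + ‖x - y‖ ^ 2) ^ p ∂μ := by
  have ht' : 0 < t' := by linarith
  have hint := (integrableOn_rpow_sq_add_norm_sub_sq (x := x) hs hp ht.ne').sub
    (integrableOn_rpow_sq_add_norm_sub_sq (x := x) hs hp ht'.ne')
  rw [← integral_sub (integrableOn_rpow_sq_add_norm_sub_sq hs hp ht.ne')
    (integrableOn_rpow_sq_add_norm_sub_sq hs hp ht'.ne')]
  calc _ ≤ ∫ y in s ∩ closedBall x t,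
        ((t ^ 2 + ‖x - y‖ ^ 2) ^ p - (t' ^ 2 + ‖x - y‖ ^ 2) ^ p) ∂μ := by
        refine setIntegral_ge_of_const_le_real (hsm.inter measurableSet_closedBall)
          (measure_ne_top_of_subset inter_subset_left hs) (fun y hy => ?_)
          (hint.mono_set inter_subset_left)
        have hy : ‖x - y‖ ≤ t := by
          rw [norm_sub_rev, ← dist_eq_norm]; exact hy.2
        have h2 : (2 * t ^ 2) ^ p ≤ (t ^ 2 + ‖x - y‖ ^ 2) ^ p :=
          Real.rpow_le_rpow_of_nonpos (by positivity) (by nlinarith [norm_nonneg (x - y)]) hp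
        have h4 : (t' ^ 2 + ‖x - y‖ ^ 2) ^ p ≤ (4 * t ^ 2) ^ p :=
          Real.rpow_le_rpow_of_nonpos (by positivity) (by nlinarith [norm_nonneg (x - y)]) hp
        rw [Real.mul_rpow (by norm_num) (by positivity)] at h2 h4
        linarith
    _ ≤ _ := setIntegral_mono_set hint
        (ae_of_all _ fun y => sub_nonneg.2 (Real.rpow_le_rpow_of_nonpos (by positivity)
          (by gcongr; linarith) hp))
        inter_subset_left.eventuallyLE

lemma mul_le_integral_sub_integral_rpow_sq_add_norm_sub_sq {m : ℕ} {κ : ℝ}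
    (hsm : MeasurableSet s) (hs : μ s ≠ ⊤) (hp : 2 * p = -m) (ht : 0 < t) (htt' : 2 * t ≤ t')
    (hκ : ENNReal.ofReal (κ * t ^ m) ≤ μ (s ∩ closedBall x t)) :
    (2 ^ p - 4 ^ p) * κ ≤
      ∫ y in s, (t ^ 2 + ‖x - y‖ ^ 2) ^ p ∂μ - ∫ y in s, (t' ^ 2 + ‖x - y‖ ^ 2) ^ p ∂μ := by
  have hp₀ : p ≤ 0 := by linarith [(m.cast_nonneg : (0 : ℝ) ≤ m)]
  have hpow : (t ^ 2) ^ p * t ^ m = 1 := by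
    rw [← Real.rpow_natCast, ← Real.rpow_natCast, ← Real.rpow_mul ht.le, ← Real.rpow_add ht,
      Nat.cast_ofNat, hp, neg_add_cancel, Real.rpow_zero]
  have hκ' : κ * t ^ m ≤ μ.real (s ∩ closedBall x t) :=
    (ENNReal.ofReal_le_iff_le_toReal (measure_ne_top_of_subset inter_subset_left hs)).1 hκ
  have h42 : 0 ≤ (2 : ℝ) ^ p - 4 ^ p :=
    sub_nonneg.2 (Real.rpow_le_rpow_of_nonpos two_pos (by norm_num) hp₀)
  calc (2 ^ p - 4 ^ p) * κ = (2 ^ p - 4 ^ p) * (t ^ 2) ^ p * (κ * t ^ m) := by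
        rw [← mul_one ((2 ^ p - 4 ^ p) * κ), ← hpow]; ring
    _ ≤ (2 ^ p - 4 ^ p) * (t ^ 2) ^ p * μ.real (s ∩ closedBall x t) := by
        gcongr
    _ ≤ _ := mul_measureReal_le_integral_sub_integral_rpow_sq_add_norm_sub_sq hsm hs hp₀ ht htt'

end Potential

section SphereMeasure

variable {E : Type*} [NormedAddCommGroup E] [InnerProductSpace ℝ E] {u : E}

lemma coe_orthogonalProjectionOnto_orthogonal_span_singleton (hu : ‖u‖ = 1) (y : E) :
    ((ℝ ∙ u)ᗮ.orthogonalProjectionOnto y : E) = y - ⟪u, y⟫ • u := by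
  rw [← Submodule.starProjection_apply, Submodule.starProjection_orthogonal_val,
    Submodule.starProjection_unit_singleton ℝ hu]

lemma norm_orthogonalProjectionOnto_orthogonal_span_singleton_sq (hu : ‖u‖ = 1) {y : E}
    (hy : ‖y‖ = 1) : ‖(ℝ ∙ u)ᗮ.orthogonalProjectionOnto y‖ ^ 2 = 1 - ⟪u, y⟫ ^ 2 := by
  rw [← Submodule.norm_coe, coe_orthogonalProjectionOnto_orthogonal_span_singleton hu,
    norm_sub_sq_real, norm_smul, hy, hu, real_inner_smul_right, real_inner_comm,
    Real.norm_eq_abs]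
  ring_nf
  rw [sq_abs]
  ring

/-- On a cap `{y ∈ S | β ≤ ⟪u, y⟫}` of the unit sphere, the height `⟪u, y⟫` is a
`β⁻¹`-Lipschitz function of the projection onto `uᗮ`. -/
lemma antilipschitzWith_orthogonalProjectionOnto_sphere_cap (hu : ‖u‖ = 1) {β : ℝ≥0}
    (hβ : 0 < β) :
    AntilipschitzWith (1 + β⁻¹) fun y : (sphere (0 : E) 1 ∩ {y | β ≤ ⟪u, y⟫} : Set E) =>
      (ℝ ∙ u)ᗮ.orthogonalProjectionOnto y := by
  refine AntilipschitzWith.of_le_mul_dist fun ⟨y, hy, hyβ⟩ ⟨y', hy', hy'β⟩ => ?_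
  rw [mem_sphere_zero_iff_norm] at hy hy'
  set P := (ℝ ∙ u)ᗮ.orthogonalProjectionOnto
  set c := ⟪u, y⟫
  set c' := ⟪u, y'⟫
  have hPy : ‖P y‖ ^ 2 = 1 - c ^ 2 :=
    norm_orthogonalProjectionOnto_orthogonal_span_singleton_sq hu hy
  have hPy' : ‖P y'‖ ^ 2 = 1 - c' ^ 2 :=
    norm_orthogonalProjectionOnto_orthogonal_span_singleton_sq hu hy'
  have hPdist : |‖P y‖ - ‖P y'‖| ≤ ‖P y - P y'‖ := abs_norm_sub_norm_le _ _
  have hPy1 : ‖P y‖ ≤ 1 := by nlinarith [norm_nonneg (P y)]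
  have hPy'1 : ‖P y'‖ ≤ 1 := by nlinarith [norm_nonneg (P y')]
  have hc : β * |c - c'| ≤ ‖P y - P y'‖ := by
    have hβc : (β : ℝ) ≤ c := hyβ
    have hβc' : (β : ℝ) ≤ c' := hy'β
    have hprod : |c - c'| * (c + c') = |‖P y‖ - ‖P y'‖| * (‖P y‖ + ‖P y'‖) := by
      have hβ' : (0 : ℝ) < β := hβ
      rw [← abs_of_pos (by linarith : 0 < c + c'), ← abs_mul,
        ← abs_of_nonneg (by positivity : 0 ≤ ‖P y‖ + ‖P y'‖), ← abs_mul, abs_eq_abs]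
      right
      linear_combination hPy - hPy'
    nlinarith [abs_nonneg (c - c'), abs_nonneg (‖P y‖ - ‖P y'‖)]
  have hy_sub : y - y' = ((P y - P y' : (ℝ ∙ u)ᗮ) : E) + (c - c') • u := by
    rw [Submodule.coe_sub, coe_orthogonalProjectionOnto_orthogonal_span_singleton hu,
      coe_orthogonalProjectionOnto_orthogonal_span_singleton hu]
    module
  rw [Subtype.dist_eq, dist_eq_norm, dist_eq_norm, hy_sub, NNReal.coe_add, NNReal.coe_one,
    NNReal.coe_inv]
  calc _ ≤ ‖P y - P y'‖ + |c - c'| := by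
        grw [norm_add_le, Submodule.norm_coe, norm_smul, hu, Real.norm_eq_abs, mul_one]
    _ ≤ _ := by
        have : |c - c'| ≤ (β : ℝ)⁻¹ * ‖P y - P y'‖ := by
          rw [le_inv_mul_iff₀ (by exact_mod_cast hβ)]; exact hc
        linarith

variable [MeasurableSpace E] [BorelSpace E] {m : ℕ}

lemma isAddHaarMeasure_hausdorffMeasure_orthogonal_span_singleton (hE : finrank ℝ E = m + 1)
    (hu : u ≠ 0) : (μH[m] : Measure (ℝ ∙ u)ᗮ).IsAddHaarMeasure := by
  have : Fact (finrank ℝ E = m + 1) := ⟨hE⟩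
  have : FiniteDimensional ℝ E := Module.finite_of_finrank_eq_succ hE
  have := isAddHaarMeasure_hausdorffMeasure (E := (ℝ ∙ u)ᗮ)
  rwa [Submodule.finrank_orthogonal_span_singleton (n := m) hu] at this

lemma hausdorffMeasure_sphere_cap_lt_top (hE : finrank ℝ E = m + 1) (hu : ‖u‖ = 1) {β : ℝ≥0}
    (hβ : 0 < β) : μH[m] (sphere (0 : E) 1 ∩ {y | β ≤ ⟪u, y⟫}) < ⊤ := by
  have : FiniteDimensional ℝ E := Module.finite_of_finrank_eq_succ hE
  have := isAddHaarMeasure_hausdorffMeasure_orthogonal_span_singleton hE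
    (ne_zero_of_norm_ne_zero (hu ▸ one_ne_zero))
  set C := sphere (0 : E) 1 ∩ {y | β ≤ ⟪u, y⟫}
  set P := (ℝ ∙ u)ᗮ.orthogonalProjectionOnto
  have hPC : range (fun y : C => P y) ⊆ closedBall 0 1 := by
    rintro _ ⟨⟨y, hy, -⟩, rfl⟩
    rw [mem_closedBall_zero_iff]
    exact (Submodule.norm_orthogonalProjectionOnto_apply_le _ y).trans
      (mem_sphere_zero_iff_norm.1 hy).le
  calc μH[m] C = μH[m] (univ : Set C) := by
        rw [← (isometry_subtype_coe (s := C)).hausdorffMeasure_image (Or.inl m.cast_nonneg),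
          image_univ, Subtype.range_coe]
    _ ≤ (1 + β⁻¹ : ℝ≥0) ^ (m : ℝ) * μH[m] (range fun y : C => P y) := by
        rw [← image_univ]
        exact (antilipschitzWith_orthogonalProjectionOnto_sphere_cap hu hβ
          ).le_hausdorffMeasure_image m.cast_nonneg _
    _ ≤ (1 + β⁻¹ : ℝ≥0) ^ (m : ℝ) * μH[m] (closedBall (0 : (ℝ ∙ u)ᗮ) 1) := by gcongr
    _ < ⊤ := ENNReal.mul_lt_top (by simp) (isCompact_closedBall _ _).measure_lt_top

theorem hausdorffMeasure_sphere_lt_top (hE : finrank ℝ E = m + 1) :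
    μH[m] (sphere (0 : E) 1) < ⊤ := by
  have : FiniteDimensional ℝ E := Module.finite_of_finrank_eq_succ hE
  refine (isCompact_sphere 0 1).measure_lt_top_of_nhdsWithin fun u hu => ⟨_, ?_,
    hausdorffMeasure_sphere_cap_lt_top hE (mem_sphere_zero_iff_norm.1 hu) (β := 2⁻¹) (by norm_num)⟩
  refine inter_mem_nhdsWithin _
    ((continuous_const.inner continuous_id).continuousAt.preimage_mem_nhds (Ici_mem_nhds ?_))
  norm_num [real_inner_self_eq_norm_sq, mem_sphere_zero_iff_norm.1 hu]

lemma hausdorffMeasure_closedBall_le_hausdorffMeasure_sphere_inter_closedBall (hu : ‖u‖ = 1)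
    {s : ℝ} (hs : s ≤ 2) {d : ℝ} (hd : 0 ≤ d) :
    μH[d] (closedBall (0 : (ℝ ∙ u)ᗮ) (s / 2)) ≤ μH[d] (sphere (0 : E) 1 ∩ closedBall u s) := by
  set P := (ℝ ∙ u)ᗮ.orthogonalProjectionOnto
  suffices hsub : closedBall 0 (s / 2) ⊆ P '' (sphere (0 : E) 1 ∩ closedBall u s) by
    grw [hsub]
    simpa using
      (Submodule.lipschitzWith_orthogonalProjectionOnto (ℝ ∙ u)ᗮ).hausdorffMeasure_image_le hd _
  intro w hw
  rw [mem_closedBall_zero_iff] at hw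
  have hw0 := norm_nonneg w
  set c := √(1 - ‖w‖ ^ 2)
  have hc : c ^ 2 = 1 - ‖w‖ ^ 2 := Real.sq_sqrt (by nlinarith)
  have hc0 : 0 ≤ c := Real.sqrt_nonneg _
  have hc1 : c ≤ 1 := Real.sqrt_le_one.2 (by nlinarith)
  have huw : ⟪u, (w : E)⟫ = 0 := Submodule.mem_orthogonal_singleton_iff_inner_right.1 w.2
  have hwu : ⟪(w : E), u⟫ = 0 := by rw [real_inner_comm, huw]
  have hcu : ⟪u, (w : E) + c • u⟫ = c := by
    rw [inner_add_right, huw, real_inner_smul_right, real_inner_self_eq_norm_sq, hu]; ring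
  refine ⟨w + c • u, ⟨?_, ?_⟩, ?_⟩
  · have : ‖(w : E) + c • u‖ ^ 2 = 1 := by
      rw [norm_add_sq_real, real_inner_smul_right, hwu, norm_smul, hu, Real.norm_eq_abs,
        abs_of_nonneg hc0, Submodule.norm_coe]
      linarith
    rw [mem_sphere_zero_iff_norm]
    exact (pow_eq_one_iff_of_nonneg (norm_nonneg _) two_ne_zero).1 this
  · -- `1 - c ≤ 1 - c ^ 2 = ‖w‖ ^ 2 ≤ ‖w‖`, so the point is within `√2 ‖w‖` of `u`
    have hsq : ‖(w : E) + c • u - u‖ ^ 2 ≤ s ^ 2 := by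
      rw [show (w : E) + c • u - u = w + (c - 1) • u by module, norm_add_sq_real,
        real_inner_smul_right, hwu, norm_smul, hu, Real.norm_eq_abs, mul_one, sq_abs,
        Submodule.norm_coe]
      nlinarith
    rw [mem_closedBall, dist_eq_norm]
    exact (pow_le_pow_iff_left₀ (norm_nonneg _) (by linarith) two_ne_zero).1 hsq
  · ext
    rw [coe_orthogonalProjectionOnto_orthogonal_span_singleton hu, hcu, add_sub_cancel_right]

theorem exists_pos_mul_pow_le_hausdorffMeasure_sphere_inter_closedBall
    (hE : finrank ℝ E = m + 1) (hu : ‖u‖ = 1) :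
    ∃ κ : ℝ, 0 < κ ∧ ∀ s, 0 ≤ s → s ≤ 2 →
      ENNReal.ofReal (κ * s ^ m) ≤ μH[m] (sphere (0 : E) 1 ∩ closedBall u s) := by
  have hu0 : u ≠ 0 := ne_zero_of_norm_ne_zero (hu ▸ one_ne_zero)
  have : Fact (finrank ℝ E = m + 1) := ⟨hE⟩
  have : FiniteDimensional ℝ E := Module.finite_of_finrank_eq_succ hE
  have := isAddHaarMeasure_hausdorffMeasure_orthogonal_span_singleton hE hu0
  set B := μH[m] (ball (0 : (ℝ ∙ u)ᗮ) 1)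
  have hB : 0 < B.toReal :=
    ENNReal.toReal_pos (measure_ball_pos _ _ one_pos).ne' measure_ball_lt_top.ne
  refine ⟨B.toReal / 2 ^ m, by positivity, fun s hs0 hs2 => ?_⟩
  calc ENNReal.ofReal (B.toReal / 2 ^ m * s ^ m) = ENNReal.ofReal ((s / 2) ^ m) * B := by
        rw [show B.toReal / 2 ^ m * s ^ m = (s / 2) ^ m * B.toReal by rw [div_pow]; ring,
          ENNReal.ofReal_mul (by positivity), ENNReal.ofReal_toReal measure_ball_lt_top.ne]
    _ = μH[m] (closedBall (0 : (ℝ ∙ u)ᗮ) (s / 2)) := by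
        rw [Measure.addHaar_closedBall _ _ (by positivity),
          Submodule.finrank_orthogonal_span_singleton (n := m) hu0]
    _ ≤ _ := hausdorffMeasure_closedBall_le_hausdorffMeasure_sphere_inter_closedBall hu hs2
        m.cast_nonneg

end SphereMeasure

/-- For `n ≥ 3` and a fixed unit vector `e₁` of `ℝ^{n−1}`, the function
`t ↦ e(t,1)` is even; it is finite (the integrand is integrable), continuous and strictly
decreasing on `(0,∞)`; and there is `c > 0` depending only on `n` such that
`e(t,1) − e(t′,1) ≥ c` whenever `0 < 2t < t′ < 1`. -/
theorem stmt15 (n : ℕ) (hn : 3 ≤ n)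
    (e₁ : EuclideanSpace ℝ (Fin (n - 1))) (he₁ : ‖e₁‖ = 1) :
    (∀ t : ℝ, eFun n e₁ t 1 = eFun n e₁ (-t) 1) ∧
    (∀ t : ℝ, 0 < t →
      IntegrableOn
        (fun y : EuclideanSpace ℝ (Fin (n - 1)) =>
          (t ^ 2 + ‖(1 : ℝ) • e₁ - y‖ ^ 2) ^ (((2 : ℝ) - n) / 2))
        (Metric.sphere 0 1) (μH[(n : ℝ) - 2])) ∧
    ContinuousOn (fun t => eFun n e₁ t 1) (Set.Ioi 0) ∧
    StrictAntiOn (fun t => eFun n e₁ t 1) (Set.Ioi 0) ∧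
    ∃ c : ℝ, 0 < c ∧ ∀ t t' : ℝ, 0 < t → 2 * t < t' → t' < 1 →
      c ≤ eFun n e₁ t 1 - eFun n e₁ t' 1 := by
  obtain ⟨m, rfl⟩ : ∃ m, n = m + 2 := ⟨n - 2, by omega⟩
  have hm : (1 : ℝ) ≤ m := by exact_mod_cast (by omega : 1 ≤ m)
  have hE : finrank ℝ (EuclideanSpace ℝ (Fin (m + 2 - 1))) = m + 1 := by simp
  have hdim : ((m + 2 : ℕ) : ℝ) - 2 = m := by push_cast; ring
  set p : ℝ := ((2 : ℝ) - (m + 2 : ℕ)) / 2 with hp_def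
  have hp2 : 2 * p = -m := by rw [hp_def]; push_cast; ring
  have hp : p < 0 := by linarith
  have h42 : (4 : ℝ) ^ p < 2 ^ p := Real.rpow_lt_rpow_of_neg two_pos (by norm_num) hp
  set S := sphere (0 : EuclideanSpace ℝ (Fin (m + 2 - 1))) 1
  have hS : μH[m] S ≠ ⊤ := (hausdorffMeasure_sphere_lt_top hE).ne
  obtain ⟨κ, hκ, hcap⟩ := exists_pos_mul_pow_le_hausdorffMeasure_sphere_inter_closedBall hE he₁
  have hS₀ : μH[m] S ≠ 0 := by
    refine (ENNReal.ofReal_pos.2 hκ |>.trans_le ?_).ne'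
    simpa using (hcap 1 zero_le_one one_le_two).trans (measure_mono inter_subset_left)
  have hC : 0 < (sphC (m + 2))⁻¹ := by
    rw [sphC, hdim]; exact inv_pos.2 (ENNReal.toReal_pos hS₀ hS)
  simp only [eFun, one_smul, hdim, ← hp_def]
  refine ⟨fun t => by rw [neg_sq], fun t ht => integrableOn_rpow_sq_add_norm_sub_sq hS hp.le ht.ne',
    (continuousOn_integral_rpow_sq_add_norm_sub_sq hS hp.le).const_mul _,
    fun t ht t' ht' htt' => mul_lt_mul_of_pos_left
      (strictAntiOn_integral_rpow_sq_add_norm_sub_sq hS hS₀ hp ht ht' htt') hC,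
    _, mul_pos hC (mul_pos (sub_pos.2 h42) hκ), fun t t' ht htt' ht' => ?_⟩
  rw [← mul_sub]
  exact mul_le_mul_of_nonneg_left (mul_le_integral_sub_integral_rpow_sq_add_norm_sub_sq
    isClosed_sphere.measurableSet hS hp2 ht htt'.le (hcap t ht.le (by linarith))) hC.le

end
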